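/- Let f₁,…,f_n : ℝ^d → ℝ satisfy ‖∇fᵢ(x) - ∇fᵢ(y)‖_p ≤ L_q‖x-y‖_q for all i (1/p+1/q=1), and f = (1/n)Σfᵢ. Consider SignSVRG (Variant I): at step t with reference point x̃ satisfying ‖x_t - x̃‖_q ≤ D, set v_t = ∇f_{i_t}(x_t) - ∇f_{i_t}(x̃) + ∇f(x̃), G_t = L_q‖x_t - x̃‖_q + ‖∇f(x̃)‖_p, and x_{t+1} = x_t - γ·sign(v_t + G_t U_t) with U_t ~ Uniform([-1,1]^d). Then: (1/T)·E[Σ_{t=1}^T ‖∇f(x_t)‖² / (2L_q D + ‖∇f(x_t)‖_p)] ≤ E[f(x_1) - f(x_{T+1})]/(Tγ) + (L_q γ d^{2/q})/2. -/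

import Mathlib

open MeasureTheory ProbabilityTheory
open scoped RealInnerProductSpace

/-- The ℓ_p norm on `ℝ^d` (for finite `p ≥ 1`). -/
noncomputable def lpNorm {d : ℕ} (p : ℝ) (x : Fin d → ℝ) : ℝ :=
  (∑ j, |x j| ^ p) ^ (1 / p)

/-- The uniform distribution on `[-1, 1]`. -/
noncomputable def unifIcc : Measure ℝ :=
  (2 : ENNReal)⁻¹ • (volume.restrict (Set.Icc (-1 : ℝ) 1))

/-- The uniform distribution on the cube `[-1, 1]^d`. -/
noncomputable def unifBox (d : ℕ) : Measure (Fin d → ℝ) :=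
  Measure.pi fun _ => unifIcc

/-- The uniform distribution on `{1, …, n}`. -/
noncomputable def unifFin (n : ℕ) : Measure (Fin n) :=
  (n : ENNReal)⁻¹ • Measure.count


section lpNorm
variable {d : ℕ} {p q : ℝ}

lemma lpNorm_nonneg (p : ℝ) (x : Fin d → ℝ) : 0 ≤ lpNorm p x :=
  Real.rpow_nonneg (Finset.sum_nonneg fun j _ => Real.rpow_nonneg (abs_nonneg _) _) _

lemma lpNorm_neg (p : ℝ) (x : Fin d → ℝ) : lpNorm p (-x) = lpNorm p x := by
  simp [_root_.lpNorm, abs_neg]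

lemma lpNorm_sub_comm (p : ℝ) (x y : Fin d → ℝ) : lpNorm p (x - y) = lpNorm p (y - x) := by
  rw [← lpNorm_neg p (x - y), neg_sub]

lemma abs_le_lpNorm (hp : 1 ≤ p) (x : Fin d → ℝ) (j : Fin d) : |x j| ≤ lpNorm p x := by
  have hp0 : 0 < p := lt_of_lt_of_le one_pos hp
  have h1 : |x j| ^ p ≤ ∑ k, |x k| ^ p :=
    Finset.single_le_sum (fun k _ => Real.rpow_nonneg (abs_nonneg _) _) (Finset.mem_univ j)
  calc |x j| = (|x j| ^ p) ^ (1 / p) := by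
        rw [← Real.rpow_mul (abs_nonneg _), mul_one_div, div_self hp0.ne', Real.rpow_one]
    _ ≤ lpNorm p x :=
      Real.rpow_le_rpow (Real.rpow_nonneg (abs_nonneg _) _) h1 (by positivity)

lemma lpNorm_smul (hp : 0 < p) (c : ℝ) (x : Fin d → ℝ) :
    lpNorm p (c • x) = |c| * lpNorm p x := by
  simp only [_root_.lpNorm, Pi.smul_apply, smul_eq_mul, abs_mul]
  simp_rw [Real.mul_rpow (abs_nonneg c) (abs_nonneg _)]
  rw [← Finset.mul_sum, Real.mul_rpow (Real.rpow_nonneg (abs_nonneg _) _)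
    (Finset.sum_nonneg fun j _ => Real.rpow_nonneg (abs_nonneg _) _),
    ← Real.rpow_mul (abs_nonneg c)]
  simp [hp.ne']

lemma lpNorm_add_le (hp : 1 ≤ p) (x y : Fin d → ℝ) :
    lpNorm p (x + y) ≤ lpNorm p x + lpNorm p y :=
  Real.Lp_add_le Finset.univ x y hp

lemma lpNorm_sum_le {ι : Type*} (hp : 1 ≤ p) (s : Finset ι) (F : ι → Fin d → ℝ) :
    lpNorm p (∑ i ∈ s, F i) ≤ ∑ i ∈ s, lpNorm p (F i) := by
  classical
  induction s using Finset.induction_on with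
  | empty => simp [_root_.lpNorm, Real.zero_rpow (by positivity : (1:ℝ)/p ≠ 0),
      (by linarith : (0:ℝ) < p).ne']
  | @insert a s ha ih =>
      rw [Finset.sum_insert ha, Finset.sum_insert ha]
      exact le_trans (lpNorm_add_le hp _ _) (by linarith [ih])

lemma lpNorm_eq_zero_iff (hp : 1 ≤ p) {x : Fin d → ℝ} (h : lpNorm p x = 0) : x = 0 := by
  funext j
  have := abs_le_lpNorm hp x j
  rw [h] at this
  have := abs_nonneg (x j)
  simp only [Pi.zero_apply]
  have : |x j| = 0 := le_antisymm (by linarith) (abs_nonneg _)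
  exact abs_eq_zero.mp this

lemma lpNorm_le_of_abs_le (hq : 1 ≤ q) {x : Fin d → ℝ} {c : ℝ} (hc : 0 ≤ c)
    (h : ∀ j, |x j| ≤ c) : lpNorm q x ≤ (d : ℝ) ^ (1 / q) * c := by
  have hq0 : 0 < q := lt_of_lt_of_le one_pos hq
  have h1 : ∑ j, |x j| ^ q ≤ (d : ℝ) * c ^ q := by
    calc ∑ j, |x j| ^ q ≤ ∑ _j : Fin d, c ^ q :=
          Finset.sum_le_sum fun j _ => Real.rpow_le_rpow (abs_nonneg _) (h j) hq0.le
      _ = (d : ℝ) * c ^ q := by simp [mul_comm]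
  calc lpNorm q x ≤ ((d : ℝ) * c ^ q) ^ (1 / q) :=
        Real.rpow_le_rpow (Finset.sum_nonneg fun j _ => Real.rpow_nonneg (abs_nonneg _) _)
          h1 (by positivity)
    _ = (d : ℝ) ^ (1 / q) * c := by
        rw [Real.mul_rpow (by positivity) (Real.rpow_nonneg hc _),
          ← Real.rpow_mul hc]
        simp [hq0.ne']

/-- Euclidean norm controlled by lpNorm. -/
lemma euclid_norm_le_lpNorm (hp : 1 ≤ p) (u : EuclideanSpace ℝ (Fin d)) :
    ‖u‖ ≤ Real.sqrt d * lpNorm p u := by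
  rw [EuclideanSpace.norm_eq]
  have h1 : ∑ j, ‖u j‖ ^ 2 ≤ (d : ℝ) * (lpNorm p u) ^ 2 := by
    calc ∑ j, ‖u j‖ ^ 2 ≤ ∑ _j : Fin d, (lpNorm p u) ^ 2 := by
          refine Finset.sum_le_sum fun j _ => ?_
          have := abs_le_lpNorm hp u j
          have h2 : ‖u j‖ = |u j| := rfl
          rw [h2]
          exact pow_le_pow_left₀ (abs_nonneg _) this 2
      _ = (d : ℝ) * (lpNorm p u) ^ 2 := by simp [mul_comm]
  calc Real.sqrt (∑ j, ‖u j‖ ^ 2) ≤ Real.sqrt ((d : ℝ) * (lpNorm p u) ^ 2) :=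
        Real.sqrt_le_sqrt h1
    _ = Real.sqrt d * lpNorm p u := by
        rw [Real.sqrt_mul (by positivity)]
        congr 1
        exact Real.sqrt_sq (lpNorm_nonneg _ _)

lemma lpNorm_le_euclid_norm (hq : 1 ≤ q) (u : EuclideanSpace ℝ (Fin d)) :
    lpNorm q u ≤ (d : ℝ) ^ (1 / q) * ‖u‖ := by
  refine lpNorm_le_of_abs_le hq (norm_nonneg u) fun j => ?_
  have h2 : ‖u j‖ = |u j| := rfl
  rw [← h2]
  rw [EuclideanSpace.norm_eq]
  have : ‖u j‖ ^ 2 ≤ ∑ k, ‖u k‖ ^ 2 :=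
    Finset.single_le_sum (f := fun k => ‖u k‖ ^ 2) (fun k _ => sq_nonneg _) (Finset.mem_univ j)
  calc ‖u j‖ = Real.sqrt (‖u j‖ ^ 2) := (Real.sqrt_sq (norm_nonneg _)).symm
    _ ≤ Real.sqrt (∑ k, ‖u k‖ ^ 2) := Real.sqrt_le_sqrt this

/-- Hölder for the inner product. -/
lemma inner_le_lpNorm_mul_lpNorm (hpq : p.HolderConjugate q) (u v : EuclideanSpace ℝ (Fin d)) :
    ⟪u, v⟫ ≤ lpNorm p u * lpNorm q v := by
  rw [PiLp.inner_apply]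
  calc (∑ j, ⟪u j, v j⟫) = ∑ j, u j * v j := by simp [mul_comm]
    _ ≤ ∑ j, |u j| * |v j| := by
        refine Finset.sum_le_sum fun j _ => ?_
        calc u j * v j ≤ |u j * v j| := le_abs_self _
          _ = |u j| * |v j| := abs_mul _ _
    _ ≤ lpNorm p u * lpNorm q v := by
        have := Real.inner_le_Lp_mul_Lq Finset.univ (fun j => |u j|) (fun j => |v j|) hpq
        simpa [abs_abs, _root_.lpNorm] using this

end lpNorm

section descent
variable {d : ℕ} {p q L : ℝ}

lemma descent_le (hpq : Real.HolderConjugate p q) (hL : 0 < L)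
    {f : EuclideanSpace ℝ (Fin d) → ℝ} {g : EuclideanSpace ℝ (Fin d) → EuclideanSpace ℝ (Fin d)}
    (hdiff : ∀ z, HasGradientAt f (g z) z)
    (hsm : ∀ z w, lpNorm p (g z - g w) ≤ L * lpNorm q (z - w))
    (a b : EuclideanSpace ℝ (Fin d)) :
    f b ≤ f a + ⟪g a, b - a⟫ + L / 2 * (lpNorm q (b - a)) ^ 2 := by
  set v := b - a with hv
  have hq0 : 0 < q := hpq.symm.pos
  -- the line map
  have hline : ∀ s : ℝ, HasDerivAt (fun s : ℝ => a + s • v) v s := by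
    intro s
    simpa using ((hasDerivAt_id s).smul_const v).const_add a
  have hφ : ∀ s : ℝ, HasDerivAt (fun s : ℝ => f (a + s • v)) ⟪g (a + s • v), v⟫ s := by
    intro s
    have h1 := ((hdiff (a + s • v)).hasFDerivAt).comp_hasDerivAt s (hline s)
    simpa [InnerProductSpace.toDual_apply_apply, Function.comp_def] using h1
  set K := (lpNorm q v) ^ 2 with hK
  set ψ := fun s : ℝ => f (a + s • v) - s * ⟪g a, v⟫ - L / 2 * s ^ 2 * K with hψ
  have hψd : ∀ s : ℝ, HasDerivAt ψ (⟪g (a + s • v), v⟫ - ⟪g a, v⟫ - L * s * K) s := by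
    intro s
    have h1 : HasDerivAt (fun s : ℝ => s * ⟪g a, v⟫) ⟪g a, v⟫ s := by
      simpa using (hasDerivAt_id s).mul_const ⟪g a, v⟫
    have h2 : HasDerivAt (fun s : ℝ => L / 2 * s ^ 2 * K) (L * s * K) s := by
      have := ((hasDerivAt_pow 2 s).const_mul (L / 2)).mul_const K
      exact this.congr_deriv (by ring)
    exact ((hφ s).sub h1).sub h2
  have hderiv_nonpos : ∀ s ∈ Set.Ioo (0:ℝ) 1, deriv ψ s ≤ 0 := by
    intro s hs
    rw [(hψd s).deriv]
    have h3 : ⟪g (a + s • v), v⟫ - ⟪g a, v⟫ = ⟪g (a + s • v) - g a, v⟫ := by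
      rw [inner_sub_left]
    rw [h3]
    have h4 : ⟪g (a + s • v) - g a, v⟫ ≤ lpNorm p (g (a + s • v) - g a) * lpNorm q v :=
      inner_le_lpNorm_mul_lpNorm hpq _ _
    have h5 : lpNorm p (g (a + s • v) - g a) ≤ L * lpNorm q ((a + s • v) - a) := hsm _ _
    have h6 : lpNorm q ((a + s • v) - a) = s * lpNorm q v := by
      have : (a + s • v) - a = s • v := by abel
      rw [this]
      rw [WithLp.ofLp_smul, lpNorm_smul hq0 s v, abs_of_pos hs.1]
    have h7 : lpNorm p (g (a + s • v) - g a) ≤ L * (s * lpNorm q v) := by rw [← h6]; exact h5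
    have h8 : ⟪g (a + s • v) - g a, v⟫ ≤ L * (s * lpNorm q v) * lpNorm q v := by
      calc ⟪g (a + s • v) - g a, v⟫ ≤ lpNorm p (g (a + s • v) - g a) * lpNorm q v := h4
        _ ≤ L * (s * lpNorm q v) * lpNorm q v :=
            mul_le_mul_of_nonneg_right h7 (lpNorm_nonneg _ _)
    have : L * (s * lpNorm q v) * lpNorm q v = L * s * K := by rw [hK]; ring
    linarith [h8, this ▸ h8]
  have hcont : ContinuousOn ψ (Set.Icc 0 1) :=
    (fun s _ => ((hψd s).differentiableAt.continuousAt.continuousWithinAt))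
  have hdiffOn : DifferentiableOn ℝ ψ (interior (Set.Icc (0:ℝ) 1)) :=
    fun s _ => (hψd s).differentiableAt.differentiableWithinAt
  have hanti : AntitoneOn ψ (Set.Icc 0 1) := by
    refine antitoneOn_of_deriv_nonpos (convex_Icc 0 1) hcont hdiffOn ?_
    intro s hs
    rw [interior_Icc] at hs
    exact hderiv_nonpos s hs
  have h01 : ψ 1 ≤ ψ 0 := hanti (Set.left_mem_Icc.mpr zero_le_one)
    (Set.right_mem_Icc.mpr zero_le_one) zero_le_one
  have e1 : a + (1:ℝ) • v = b := by rw [one_smul, hv]; abel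
  have e0 : a + (0:ℝ) • v = a := by rw [zero_smul]; abel
  simp only [hψ, e1, e0, one_pow, mul_one, one_mul, zero_pow, mul_zero, zero_mul, sub_zero] at h01
  -- h01 : f b - ⟪g a, v⟫ - L / 2 * K ≤ f a
  nlinarith [h01]

lemma descent_ge (hpq : Real.HolderConjugate p q) (hL : 0 < L)
    {f : EuclideanSpace ℝ (Fin d) → ℝ} {g : EuclideanSpace ℝ (Fin d) → EuclideanSpace ℝ (Fin d)}
    (hdiff : ∀ z, HasGradientAt f (g z) z)
    (hsm : ∀ z w, lpNorm p (g z - g w) ≤ L * lpNorm q (z - w))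
    (a b : EuclideanSpace ℝ (Fin d)) :
    f a + ⟪g a, b - a⟫ - L / 2 * (lpNorm q (b - a)) ^ 2 ≤ f b := by
  have hdiff' : ∀ z, HasGradientAt (fun w => -f w) (-g z) z := by
    intro z
    rw [hasGradientAt_iff_hasFDerivAt, map_neg]
    exact (hdiff z).hasFDerivAt.neg
  have hsm' : ∀ z w, lpNorm p ((fun z => -g z) z - (fun z => -g z) w) ≤ L * lpNorm q (z - w) := by
    intro z w
    have : (-g z) - (-g w) = g w - g z := by abel
    rw [this, WithLp.ofLp_sub, _root_.lpNorm_sub_comm, ← WithLp.ofLp_sub]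
    exact hsm z w
  have := descent_le hpq hL hdiff' hsm' a b
  simp only [inner_neg_left] at this
  linarith
end descent

instance : IsProbabilityMeasure unifIcc := by
  constructor
  rw [unifIcc]
  simp [Real.volume_Icc]
  rw [show ENNReal.ofReal (1 + 1) = 2 by norm_num]
  exact ENNReal.inv_mul_cancel (by norm_num) (by norm_num)

instance (d : ℕ) : IsProbabilityMeasure (unifBox d) := by
  rw [unifBox]; infer_instance

instance (n : ℕ) [NeZero n] : IsProbabilityMeasure (unifFin n) := by
  constructor
  rw [unifFin]
  simp [Measure.count_univ]
  rw [ENNReal.inv_mul_cancel] <;> simp [NeZero.ne n]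

lemma measurable_realSign : Measurable Real.sign := by
  have h : Real.sign = fun r : ℝ => if r < 0 then (-1 : ℝ) else if 0 < r then 1 else 0 := by
    funext r; rfl
  rw [h]
  exact Measurable.ite (measurableSet_lt measurable_id measurable_const) measurable_const
    (Measurable.ite (measurableSet_lt measurable_const measurable_id) measurable_const
      measurable_const)

lemma abs_sign_le (r : ℝ) : |Real.sign r| ≤ 1 := by
  rcases Real.sign_apply_eq r with h | h | h <;> rw [h] <;> norm_num

lemma integral_sign_unifIcc {v G : ℝ} (hG : 0 < G) (hv : |v| ≤ G) :
    ∫ r, Real.sign (v + G * r) ∂unifIcc = v / G := by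
  set c : ℝ := -(v / G) with hc
  have habs : |v / G| ≤ 1 := by
    rw [abs_div, abs_of_pos hG]
    exact (div_le_one hG).mpr hv
  have hc1 : -1 ≤ c := by
    have := abs_le.mp habs
    simp only [hc]; linarith [this.2]
  have hc2 : c ≤ 1 := by
    have := abs_le.mp habs
    simp only [hc]; linarith [this.1]
  have hsplit : Set.Ico (-1 : ℝ) c ∪ Set.Icc c 1 = Set.Icc (-1 : ℝ) 1 :=
    Set.Ico_union_Icc_eq_Icc hc1 hc2
  have hdisj : Disjoint (Set.Ico (-1 : ℝ) c) (Set.Icc c 1) := by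
    rw [Set.disjoint_left]
    intro r hr hr'
    exact absurd hr'.1 (not_le.mpr hr.2)
  have hGc : G * c = -v := by
    rw [hc]
    field_simp
  have hneg : ∀ r ∈ Set.Ico (-1 : ℝ) c, Real.sign (v + G * r) = -1 := by
    intro r hr
    apply Real.sign_of_neg
    have h1 : r < c := hr.2
    nlinarith [mul_lt_mul_of_pos_left h1 hG]
  have hpos : ∀ r ∈ Set.Ioc c 1, Real.sign (v + G * r) = 1 := by
    intro r hr
    apply Real.sign_of_pos
    have h1 : c < r := hr.1
    nlinarith [mul_lt_mul_of_pos_left h1 hG]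
  have hbound : ∀ r : ℝ, ‖Real.sign (v + G * r)‖ ≤ 1 := by
    intro r
    rw [Real.norm_eq_abs]
    exact abs_sign_le _
  have hmeas : Measurable fun r : ℝ => Real.sign (v + G * r) :=
    measurable_realSign.comp (measurable_const.add (measurable_const.mul measurable_id))
  have hint1 : IntegrableOn (fun r : ℝ => Real.sign (v + G * r)) (Set.Ico (-1:ℝ) c) volume := by
    refine (integrable_const (1 : ℝ)).mono' hmeas.aestronglyMeasurable ?_
    · exact Filter.Eventually.of_forall hbound
  have hint2 : IntegrableOn (fun r : ℝ => Real.sign (v + G * r)) (Set.Icc c 1) volume := by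
    refine (integrable_const (1 : ℝ)).mono' hmeas.aestronglyMeasurable ?_
    · exact Filter.Eventually.of_forall hbound
  have key : ∫ r in Set.Icc (-1:ℝ) 1, Real.sign (v + G * r) = 2 * (v / G) := by
    rw [← hsplit, setIntegral_union hdisj measurableSet_Icc hint1 hint2]
    have e1 : ∫ r in Set.Ico (-1:ℝ) c, Real.sign (v + G * r) = -(c + 1) := by
      rw [setIntegral_congr_fun measurableSet_Ico hneg, setIntegral_const, Real.volume_real_Ico_of_le hc1,
        smul_eq_mul]
      ring
    have e2 : ∫ r in Set.Icc c 1, Real.sign (v + G * r) = 1 - c := by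
      have hae : ∀ᵐ r ∂(volume.restrict (Set.Icc c 1)), Real.sign (v + G * r) = 1 := by
        have hc0 : (volume : Measure ℝ) {c} = 0 := Real.volume_singleton
        have h1 : ∀ᵐ r ∂volume, r ∉ ({c} : Set ℝ) := by
          rw [← MeasureTheory.measure_eq_zero_iff_ae_notMem] at *
          exact hc0
        refine (ae_restrict_iff' measurableSet_Icc).mpr ?_
        filter_upwards [h1] with r hr hmem
        have : c < r ∨ r = c := by
          rcases lt_or_eq_of_le hmem.1 with h | h
          · exact Or.inl h
          · exact Or.inr h.symm
        rcases this with h | h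
        · exact hpos r ⟨h, hmem.2⟩
        · exact absurd (h ▸ rfl) hr
      rw [integral_congr_ae hae, setIntegral_const, Real.volume_real_Icc_of_le hc2,
        smul_eq_mul]
      ring
    rw [e1, e2, hc]
    ring
  rw [unifIcc, integral_smul_measure]
  rw [show (volume.restrict (Set.Icc (-1:ℝ) 1)) = volume.restrict (Set.Icc (-1:ℝ) 1) from rfl]
  rw [key]
  rw [show ((2:ENNReal)⁻¹).toReal = (2:ℝ)⁻¹ by simp, smul_eq_mul]
  field_simp

lemma map_eval_pi {ι : Type*} [Fintype ι] {α : ι → Type*} [∀ i, MeasurableSpace (α i)]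
    (μ : ∀ i, Measure (α i)) [∀ i, IsProbabilityMeasure (μ i)] (j : ι) :
    Measure.map (Function.eval j) (Measure.pi μ) = μ j := by
  classical
  ext s hs
  rw [Measure.map_apply (measurable_pi_apply j) hs, Set.eval_preimage, Measure.pi_pi]
  rw [Finset.prod_eq_single j (fun i _ hij => by simp [Function.update_of_ne hij])
    (fun h => absurd (Finset.mem_univ j) h)]
  simp

lemma integral_eval_unifBox {d : ℕ} (j : Fin d) (g : ℝ → ℝ) (hg : Measurable g) :
    ∫ u : Fin d → ℝ, g (u j) ∂unifBox d = ∫ r, g r ∂unifIcc := by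
  have h1 : ∫ u : Fin d → ℝ, g (u j) ∂unifBox d
      = ∫ r, g r ∂(Measure.map (Function.eval j) (unifBox d)) :=
    (integral_map (measurable_pi_apply j).aemeasurable hg.aestronglyMeasurable).symm
  rw [h1, show (unifBox d) = Measure.pi (fun _ => unifIcc) from rfl, map_eval_pi]

section core
variable {d n : ℕ}

local notation "E" => EuclideanSpace ℝ (Fin d)

lemma norm_sq_eq_sum_sq (a : E) : ‖a‖ ^ 2 = ∑ j, (a j) ^ 2 := by
  rw [EuclideanSpace.norm_eq, Real.sq_sqrt (Finset.sum_nonneg fun j _ => sq_nonneg _)]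
  congr 1
  funext j
  rw [Real.norm_eq_abs, sq_abs]

/-- The inner expectation over `(i, u)` for fixed `(a, b)`. -/
lemma exp_inner_eq (hn : 0 < n) {p q L : ℝ} (hp : 1 ≤ p) (hq : 1 ≤ q) (hL : 0 < L)
    (gs : Fin n → E → E) (gf : E → E)
    (hgf : ∀ (y : E) (j : Fin d), gf y j = (1 / n : ℝ) * ∑ i, gs i y j)
    (hbound : ∀ (i : Fin n) (a b : E) (j : Fin d),
      |gs i a j - gs i b j + gf b j| ≤ L * lpNorm q (a - b) + lpNorm p (gf b))
    (a b : E) :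
    ∫ z : Fin n × (Fin d → ℝ),
        (∑ j, gf a j * Real.sign (gs z.1 a j - gs z.1 b j + gf b j
          + (L * lpNorm q (a - b) + lpNorm p (gf b)) * z.2 j))
        ∂((unifFin n).prod (unifBox d))
      = ‖gf a‖ ^ 2 / (L * lpNorm q (a - b) + lpNorm p (gf b)) := by
  haveI : NeZero n := ⟨hn.ne'⟩
  set G : ℝ := L * lpNorm q (a - b) + lpNorm p (gf b) with hG
  have hG0 : 0 ≤ G := by
    have h1 := lpNorm_nonneg q (a - b)
    have h2 := lpNorm_nonneg p (gf b)
    nlinarith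
  rcases eq_or_lt_of_le hG0 with hGz | hGpos
  · -- degenerate case: G = 0, gf a = 0
    have h1 : lpNorm q (a - b) = 0 := by
      have h2 := lpNorm_nonneg q (a - b)
      have h3 := lpNorm_nonneg p (gf b)
      nlinarith [hGz.symm]
    have h2 : lpNorm p (gf b) = 0 := by
      have h3 := lpNorm_nonneg q (a - b)
      nlinarith [hGz.symm, lpNorm_nonneg p (gf b)]
    have hab : a = b := by
      have := lpNorm_eq_zero_iff hq h1
      have h4 : a - b = 0 := (WithLp.ofLp_eq_zero 2).mp this
      exact sub_eq_zero.mp h4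
    have hgfb : gf b = 0 := (WithLp.ofLp_eq_zero 2).mp (lpNorm_eq_zero_iff hp h2)
    have hgfa : gf a = 0 := by rw [hab]; exact hgfb
    have hz : ∀ j : Fin d, gf a j = 0 := fun j => by rw [hgfa]; rfl
    have : ∀ z : Fin n × (Fin d → ℝ), (∑ j, gf a j * Real.sign (gs z.1 a j - gs z.1 b j + gf b j
          + G * z.2 j)) = 0 := by
      intro z
      refine Finset.sum_eq_zero fun j _ => ?_
      rw [hz j, zero_mul]
    rw [show (fun z : Fin n × (Fin d → ℝ) => (∑ j, gf a j * Real.sign (gs z.1 a j - gs z.1 b j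
        + gf b j + G * z.2 j))) = fun _ => (0:ℝ) from funext this]
    rw [integral_const]
    simp [hgfa]
  · -- main case G > 0
    have hvG : ∀ (i : Fin n) (j : Fin d), |gs i a j - gs i b j + gf b j| ≤ G := fun i j =>
      hbound i a b j
    -- measurability of the integrand
    have hmeas : ∀ (i : Fin n) (j : Fin d), Measurable (fun u : Fin d → ℝ =>
        gf a j * Real.sign (gs i a j - gs i b j + gf b j + G * u j)) := by
      intro i j
      exact (measurable_realSign.comp
        (measurable_const.add (measurable_const.mul (measurable_pi_apply j)))).const_mul _
    have hintu : ∀ (i : Fin n) (j : Fin d), Integrable (fun u : Fin d → ℝ =>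
        gf a j * Real.sign (gs i a j - gs i b j + gf b j + G * u j)) (unifBox d) := by
      intro i j
      refine (integrable_const (|gf a j|)).mono' (hmeas i j).aestronglyMeasurable ?_
      refine Filter.Eventually.of_forall fun u => ?_
      rw [Real.norm_eq_abs, abs_mul]
      calc |gf a j| * |Real.sign _| ≤ |gf a j| * 1 :=
            mul_le_mul_of_nonneg_left (abs_sign_le _) (abs_nonneg _)
        _ = |gf a j| := mul_one _
    -- whole-integrand measurability and integrability on the product
    have hmeasz : Measurable (fun z : Fin n × (Fin d → ℝ) =>
        (∑ j, gf a j * Real.sign (gs z.1 a j - gs z.1 b j + gf b j + G * z.2 j))) := by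
      refine Finset.measurable_sum _ fun j _ => ?_
      have h1 : Measurable (fun z : Fin n × (Fin d → ℝ) =>
          gs z.1 a j - gs z.1 b j + gf b j + G * z.2 j) := by
        have hm1 : Measurable (fun z : Fin n × (Fin d → ℝ) =>
            gs z.1 a j - gs z.1 b j + gf b j) :=
          (measurable_from_top (f := fun i : Fin n => gs i a j - gs i b j + gf b j)).comp
            measurable_fst
        exact hm1.add ((((measurable_pi_apply j).comp measurable_snd :
            Measurable fun z : Fin n × (Fin d → ℝ) => z.2 j)).const_mul G)
      exact (measurable_realSign.comp h1).const_mul _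
    have hintz : Integrable (fun z : Fin n × (Fin d → ℝ) =>
        (∑ j, gf a j * Real.sign (gs z.1 a j - gs z.1 b j + gf b j + G * z.2 j)))
        ((unifFin n).prod (unifBox d)) := by
      refine (integrable_const (∑ j, |gf a j|)).mono' hmeasz.aestronglyMeasurable ?_
      refine Filter.Eventually.of_forall fun z => ?_
      rw [Real.norm_eq_abs]
      calc |∑ j, gf a j * Real.sign (gs z.1 a j - gs z.1 b j + gf b j + G * z.2 j)|
          ≤ ∑ j, |gf a j * Real.sign (gs z.1 a j - gs z.1 b j + gf b j + G * z.2 j)| :=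
            Finset.abs_sum_le_sum_abs _ _
        _ ≤ ∑ j, |gf a j| := by
            refine Finset.sum_le_sum fun j _ => ?_
            rw [abs_mul]
            calc |gf a j| * |Real.sign _| ≤ |gf a j| * 1 :=
                  mul_le_mul_of_nonneg_left (abs_sign_le _) (abs_nonneg _)
              _ = |gf a j| := mul_one _
    rw [MeasureTheory.integral_prod _ hintz]
    -- inner integral over u
    have hinner : ∀ i : Fin n, ∫ u : Fin d → ℝ,
        (∑ j, gf a j * Real.sign (gs i a j - gs i b j + gf b j + G * u j)) ∂(unifBox d)
        = ∑ j, gf a j * ((gs i a j - gs i b j + gf b j) / G) := by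
      intro i
      rw [integral_finset_sum _ fun j _ => hintu i j]
      congr 1
      funext j
      rw [MeasureTheory.integral_const_mul]
      congr 1
      have h1 : ∫ u : Fin d → ℝ, Real.sign (gs i a j - gs i b j + gf b j + G * u j) ∂(unifBox d)
          = ∫ r, Real.sign (gs i a j - gs i b j + gf b j + G * r) ∂unifIcc :=
        integral_eval_unifBox j (fun r => Real.sign (gs i a j - gs i b j + gf b j + G * r))
          (measurable_realSign.comp (measurable_const.add (measurable_const.mul measurable_id)))
      rw [h1, integral_sign_unifIcc hGpos (hvG i j)]
    rw [show (fun i => ∫ u : Fin d → ℝ,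
        (∑ j, gf a j * Real.sign (gs i a j - gs i b j + gf b j + G * u j)) ∂(unifBox d))
        = fun i => ∑ j, gf a j * ((gs i a j - gs i b j + gf b j) / G) from funext hinner]
    -- integral over i
    rw [unifFin, integral_smul_measure, MeasureTheory.integral_fintype (Integrable.of_finite)]
    simp only [measureReal_def, Measure.count_singleton, ENNReal.toReal_one, one_smul]
    rw [Finset.sum_comm]
    have hsum : ∀ j : Fin d, ∑ i, gf a j * ((gs i a j - gs i b j + gf b j) / G)
        = gf a j * ((n : ℝ) * gf a j) / G := by
      intro j
      rw [← Finset.mul_sum]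
      rw [← Finset.sum_div]
      have h2 : ∑ i, (gs i a j - gs i b j + gf b j)
          = (n : ℝ) * gf a j := by
        rw [Finset.sum_add_distrib, Finset.sum_sub_distrib, Finset.sum_const, Finset.card_univ,
          Fintype.card_fin, nsmul_eq_mul]
        have ha := hgf a j
        have hb := hgf b j
        have hnne : (n : ℝ) ≠ 0 := Nat.cast_ne_zero.mpr hn.ne'
        field_simp at ha hb
        -- ha : gf a j * n = ∑ i, gs i a j (or some arrangement)
        nlinarith [ha, hb]
      rw [h2]
      ring
    calc (↑n : ENNReal)⁻¹.toReal • ∑ j, ∑ i, gf a j * ((gs i a j - gs i b j + gf b j) / G)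
        = (n : ℝ)⁻¹ * ∑ j, gf a j * ((n : ℝ) * gf a j) / G := by
          rw [smul_eq_mul]
          congr 1
          · simp
          · exact Finset.sum_congr rfl fun j _ => hsum j
      _ = (∑ j, (gf a j) ^ 2) / G := by
          rw [Finset.mul_sum, Finset.sum_div]
          refine Finset.sum_congr rfl fun j _ => ?_
          have hnne : (n : ℝ) ≠ 0 := Nat.cast_ne_zero.mpr hn.ne'
          field_simp
      _ = ‖gf a‖ ^ 2 / G := by rw [norm_sq_eq_sum_sq]
end core


set_option maxHeartbeats 1000000 in
/-- Descent bound for SignSVRG (Variant I): for `L_q`-smooth components, iterates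
`x_{t+1} = x_t - γ sign(v_t + G_t U_t)` with `v_t = ∇f_{i_t}(x_t) - ∇f_{i_t}(x̃_t) + ∇f(x̃_t)`,
noise magnitude `G_t = L_q‖x_t - x̃_t‖_q + ‖∇f(x̃_t)‖_p`, and reference points at
ℓ_q-distance at most `D`, one has
`(1/T) E[Σ_{t=1}^T ‖∇f(x_t)‖² / (2 L_q D + ‖∇f(x_t)‖_p)]
  ≤ E[f(x_1) - f(x_{T+1})]/(Tγ) + L_q γ d^{2/q} / 2`. -/
theorem signSVRG_variantI_descent {d n : ℕ} (hd : 0 < d) (hn : 0 < n)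
    {Ω : Type*} [MeasurableSpace Ω] (μ : Measure Ω) [IsProbabilityMeasure μ]
    (p q L D γ : ℝ) (hp : 1 ≤ p) (hq : 1 ≤ q) (hpq : 1 / p + 1 / q = 1)
    (hL : 0 < L) (hD : 0 < D) (hγ : 0 < γ)
    (fs : Fin n → EuclideanSpace ℝ (Fin d) → ℝ)
    (gs : Fin n → EuclideanSpace ℝ (Fin d) → EuclideanSpace ℝ (Fin d))
    (hdiff : ∀ i x, HasGradientAt (fs i) (gs i x) x)
    (hsmooth : ∀ i x y, lpNorm p (gs i x - gs i y) ≤ L * lpNorm q (x - y))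
    (f : EuclideanSpace ℝ (Fin d) → ℝ)
    (hf : f = fun x => (1 / n : ℝ) * ∑ i, fs i x)
    (gf : EuclideanSpace ℝ (Fin d) → EuclideanSpace ℝ (Fin d))
    (hgf : gf = fun x => (1 / n : ℝ) • ∑ i, gs i x)
    (x : ℕ → Ω → EuclideanSpace ℝ (Fin d))
    (xref : ℕ → Ω → EuclideanSpace ℝ (Fin d))
    (it : ℕ → Ω → Fin n) (U : ℕ → Ω → Fin d → ℝ)
    (hxmeas : ∀ t, Measurable (x t)) (hrefmeas : ∀ t, Measurable (xref t))
    (himeas : ∀ t, Measurable (it t)) (hUmeas : ∀ t, Measurable (U t))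
    (hclose : ∀ t ω, lpNorm q (x t ω - xref t ω) ≤ D)
    (Gt : ℕ → Ω → ℝ)
    (hGt : ∀ t ω, Gt t ω = L * lpNorm q (x t ω - xref t ω) + lpNorm p (gf (xref t ω)))
    (hrec : ∀ t ω j, x (t + 1) ω j = x t ω j -
      γ * Real.sign (gs (it t ω) (x t ω) j - gs (it t ω) (xref t ω) j
        + gf (xref t ω) j + Gt t ω * U t ω j))
    -- `i_t` uniform on `{1,…,n}`, `U_t` uniform on `[-1,1]^d`, mutually independent
    (hlaw : ∀ t, Measure.map (fun ω => (it t ω, U t ω)) μ = (unifFin n).prod (unifBox d))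
    -- `(i_t, U_t)` independent of the current iterate and reference point
    (hindep : ∀ t, IndepFun (fun ω => (it t ω, U t ω)) (fun ω => (x t ω, xref t ω)) μ)
    (hint : ∀ t, Integrable (fun ω => f (x t ω)) μ)
    (T : ℕ) (hT : 1 ≤ T) :
    (1 / T : ℝ) * ∫ ω, (∑ t ∈ Finset.Icc 1 T,
        ‖gf (x t ω)‖ ^ 2 / (2 * L * D + lpNorm p (gf (x t ω)))) ∂μ
      ≤ (∫ ω, (f (x 1 ω) - f (x (T + 1) ω)) ∂μ) / (T * γ)
        + L * γ * (d : ℝ) ^ (2 / q) / 2 := by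
  classical
  haveI : NeZero n := ⟨hn.ne'⟩
  have hppos : 0 < p := lt_of_lt_of_le one_pos hp
  have hqpos : 0 < q := lt_of_lt_of_le one_pos hq
  have hp1 : 1 < p := by
    by_contra hcon
    push_neg at hcon
    have hpe : p = 1 := le_antisymm hcon hp
    rw [hpe] at hpq
    rw [show (1:ℝ)/1 = 1 by norm_num] at hpq
    have h1 : 1/q = 0 := by linarith
    have h2 : 0 < 1/q := by positivity
    linarith
  have hconj : p.HolderConjugate q := ⟨by simpa [one_div] using hpq, hppos, hqpos⟩
  -- gradient of f
  have hdiff_f : ∀ z, HasGradientAt f (gf z) z := by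
    intro z
    rw [hf, hgf, hasGradientAt_iff_hasFDerivAt]
    have h1 : HasFDerivAt (fun y => ∑ i, fs i y)
        (∑ i, (InnerProductSpace.toDual ℝ (EuclideanSpace ℝ (Fin d))) (gs i z)) z :=
      HasFDerivAt.fun_sum fun i _ => (hdiff i z).hasFDerivAt
    have h2 : HasFDerivAt (fun y => (1/n : ℝ) * ∑ i, fs i y)
        ((1/n : ℝ) • ∑ i, (InnerProductSpace.toDual ℝ (EuclideanSpace ℝ (Fin d))) (gs i z)) z := by
      exact h1.const_mul (1/n : ℝ)
    have h3 : (InnerProductSpace.toDual ℝ (EuclideanSpace ℝ (Fin d))) ((1/n : ℝ) • ∑ i, gs i z)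
        = (1/n : ℝ) • ∑ i, (InnerProductSpace.toDual ℝ (EuclideanSpace ℝ (Fin d))) (gs i z) := by
      simp
    rw [h3]
    exact h2
  -- smoothness of gf
  have hnne : (n : ℝ) ≠ 0 := Nat.cast_ne_zero.mpr hn.ne'
  have hsm_f : ∀ z w, lpNorm p (gf z - gf w) ≤ L * lpNorm q (z - w) := by
    intro z w
    have h1 : gf z - gf w = (1/n : ℝ) • ∑ i, (gs i z - gs i w) := by
      rw [hgf]
      simp only
      rw [Finset.sum_sub_distrib, smul_sub]
    rw [h1, WithLp.ofLp_smul, lpNorm_smul hppos]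
    have h2 : lpNorm p (∑ i, (gs i z - gs i w)) ≤ ∑ i : Fin n, lpNorm p (gs i z - gs i w) :=
      _root_.lpNorm_sum_le hp _ _
    have h3 : ∑ i : Fin n, lpNorm p (gs i z - gs i w) ≤ (n : ℝ) * (L * lpNorm q (z - w)) := by
      calc ∑ i : Fin n, lpNorm p (gs i z - gs i w) ≤ ∑ _i : Fin n, L * lpNorm q (z - w) :=
            Finset.sum_le_sum fun i _ => hsmooth i z w
        _ = (n : ℝ) * (L * lpNorm q (z - w)) := by simp [mul_comm]
    have h4 : |1/(n:ℝ)| = 1/(n:ℝ) := abs_of_pos (by positivity)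
    rw [h4, WithLp.ofLp_sum]
    calc 1/(n:ℝ) * lpNorm p (∑ i, (gs i z - gs i w))
        ≤ 1/(n:ℝ) * ((n : ℝ) * (L * lpNorm q (z - w))) := by
          refine mul_le_mul_of_nonneg_left (le_trans h2 h3) (by positivity)
      _ = L * lpNorm q (z - w) := by field_simp
  -- coordinate bound on the stochastic gradient estimate
  have hbound : ∀ (i : Fin n) (a b : EuclideanSpace ℝ (Fin d)) (j : Fin d),
      |gs i a j - gs i b j + gf b j| ≤ L * lpNorm q (a - b) + lpNorm p (gf b) := by
    intro i a b j
    have h1 : gs i a j - gs i b j + gf b j = (gs i a - gs i b + gf b :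
        EuclideanSpace ℝ (Fin d)) j := rfl
    rw [h1]
    calc |(gs i a - gs i b + gf b : EuclideanSpace ℝ (Fin d)) j|
        ≤ lpNorm p (gs i a - gs i b + gf b) := abs_le_lpNorm hp _ j
      _ ≤ lpNorm p (gs i a - gs i b) + lpNorm p (gf b) := lpNorm_add_le hp _ _
      _ ≤ L * lpNorm q (a - b) + lpNorm p (gf b) := by linarith [hsmooth i a b]
  -- continuity and measurability of gs, gf
  have hlpcont : ∀ r : ℝ, 0 < r → Continuous fun v : Fin d → ℝ => lpNorm r v := by
    intro r hr
    exact (Real.continuous_rpow_const (by positivity)).comp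
      (continuous_finset_sum _ fun j _ =>
        (Real.continuous_rpow_const hr.le).comp (continuous_abs.comp (continuous_apply j)))
  have hgs_cont : ∀ i, Continuous (gs i) := by
    intro i
    have hK : (0:ℝ) ≤ Real.sqrt d * L * (d : ℝ) ^ (1/q) := by positivity
    have : LipschitzWith (Real.toNNReal (Real.sqrt d * L * (d : ℝ) ^ (1/q))) (gs i) := by
      apply LipschitzWith.of_dist_le_mul
      intro z w
      rw [dist_eq_norm, dist_eq_norm, Real.coe_toNNReal _ hK]
      calc ‖gs i z - gs i w‖ ≤ Real.sqrt d * lpNorm p (gs i z - gs i w) :=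
            euclid_norm_le_lpNorm hp _
        _ ≤ Real.sqrt d * (L * lpNorm q (z - w)) :=
            mul_le_mul_of_nonneg_left (hsmooth i z w) (Real.sqrt_nonneg _)
        _ ≤ Real.sqrt d * (L * ((d : ℝ) ^ (1/q) * ‖z - w‖)) := by
            refine mul_le_mul_of_nonneg_left (mul_le_mul_of_nonneg_left ?_ hL.le)
              (Real.sqrt_nonneg _)
            exact lpNorm_le_euclid_norm hq _
        _ = Real.sqrt d * L * (d : ℝ) ^ (1/q) * ‖z - w‖ := by ring
    exact this.continuous
  have hgf_cont : Continuous gf := by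
    rw [hgf]
    exact (continuous_finset_sum _ fun i _ => hgs_cont i).const_smul (1 / (n:ℝ))
  have hgf_meas : Measurable gf := hgf_cont.measurable
  have hgf' : ∀ (y : EuclideanSpace ℝ (Fin d)) (j : Fin d),
      gf y j = (1 / n : ℝ) * ∑ i, gs i y j := by
    intro y j
    rw [hgf]
    show ((1/n : ℝ) • ∑ i, gs i y) j = _
    rw [PiLp.smul_apply, smul_eq_mul]
    congr 1
    rw [WithLp.ofLp_sum]; exact Finset.sum_apply j Finset.univ _
  -- the function h
  set h : EuclideanSpace ℝ (Fin d) → ℝ :=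
    fun a => ‖gf a‖ ^ 2 / (2 * L * D + lpNorm p (gf a)) with hh
  have hHmeas : Measurable h := by
    refine Measurable.div ?_ ?_
    · exact (hgf_cont.norm.measurable).pow_const 2
    · exact measurable_const.add ((hlpcont p hppos).measurable.comp ((WithLp.measurable_ofLp 2 _).comp hgf_meas))
  have hHnonneg : ∀ a, 0 ≤ h a := by
    intro a
    refine div_nonneg (by positivity) ?_
    have := lpNorm_nonneg p (gf a)
    nlinarith
  set Kd : ℝ := (d : ℝ) ^ (2/q) with hKd
  have hKdnn : 0 ≤ Kd := Real.rpow_nonneg (Nat.cast_nonneg d) _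
  have hKd' : ((d : ℝ) ^ (1/q)) ^ 2 = Kd := by
    rw [hKd, ← Real.rpow_natCast ((d:ℝ) ^ (1/q)) 2, ← Real.rpow_mul (Nat.cast_nonneg d)]
    norm_num
    congr 1
    ring
  set C : ℝ := L/2 * γ^2 * Kd with hC
  have hCnn : 0 ≤ C := by positivity
  -- the kernel Ψ
  set lawZ : Measure (Fin n × (Fin d → ℝ)) := (unifFin n).prod (unifBox d) with hlawZ
  set Ψ : ((EuclideanSpace ℝ (Fin d)) × (EuclideanSpace ℝ (Fin d)))
      × (Fin n × (Fin d → ℝ)) → ℝ :=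
    fun w => ∑ j, gf w.1.1 j * Real.sign (gs w.2.1 w.1.1 j - gs w.2.1 w.1.2 j + gf w.1.2 j
      + (L * lpNorm q (w.1.1 - w.1.2) + lpNorm p (gf w.1.2)) * w.2.2 j) with hΨdef
  -- measurability of Ψ
  have hΨmeas : Measurable Ψ := by
    rw [hΨdef]
    refine Finset.measurable_sum _ fun j _ => ?_
    have ma : Measurable fun w : ((EuclideanSpace ℝ (Fin d)) × (EuclideanSpace ℝ (Fin d)))
        × (Fin n × (Fin d → ℝ)) => w.1.1 := measurable_fst.comp measurable_fst
    have mb : Measurable fun w : ((EuclideanSpace ℝ (Fin d)) × (EuclideanSpace ℝ (Fin d)))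
        × (Fin n × (Fin d → ℝ)) => w.1.2 := measurable_snd.comp measurable_fst
    have mi : Measurable fun w : ((EuclideanSpace ℝ (Fin d)) × (EuclideanSpace ℝ (Fin d)))
        × (Fin n × (Fin d → ℝ)) => w.2.1 := measurable_fst.comp measurable_snd
    have mu : Measurable fun w : ((EuclideanSpace ℝ (Fin d)) × (EuclideanSpace ℝ (Fin d)))
        × (Fin n × (Fin d → ℝ)) => w.2.2 j :=
      (measurable_pi_apply j).comp (measurable_snd.comp measurable_snd)
    have m1 : Measurable fun w : ((EuclideanSpace ℝ (Fin d)) × (EuclideanSpace ℝ (Fin d)))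
        × (Fin n × (Fin d → ℝ)) => gf w.1.1 j := (measurable_pi_apply j).comp ((WithLp.measurable_ofLp 2 _).comp (hgf_meas.comp ma))
    have m2 : Measurable fun w : ((EuclideanSpace ℝ (Fin d)) × (EuclideanSpace ℝ (Fin d)))
        × (Fin n × (Fin d → ℝ)) => gf w.1.2 j := (measurable_pi_apply j).comp ((WithLp.measurable_ofLp 2 _).comp (hgf_meas.comp mb))
    have m3 : Measurable fun zi : (EuclideanSpace ℝ (Fin d)) × Fin n => gs zi.2 zi.1 j := by
      refine measurable_from_prod_countable_left fun i => ?_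
      exact (measurable_pi_apply j).comp ((WithLp.measurable_ofLp 2 _).comp (hgs_cont i).measurable)
    have m4 : Measurable fun w : ((EuclideanSpace ℝ (Fin d)) × (EuclideanSpace ℝ (Fin d)))
        × (Fin n × (Fin d → ℝ)) => gs w.2.1 w.1.1 j := m3.comp (ma.prodMk mi)
    have m5 : Measurable fun w : ((EuclideanSpace ℝ (Fin d)) × (EuclideanSpace ℝ (Fin d)))
        × (Fin n × (Fin d → ℝ)) => gs w.2.1 w.1.2 j := m3.comp (mb.prodMk mi)
    have msub : Measurable fun w : ((EuclideanSpace ℝ (Fin d)) × (EuclideanSpace ℝ (Fin d)))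
        × (Fin n × (Fin d → ℝ)) => (w.1.1 - w.1.2 : EuclideanSpace ℝ (Fin d)) :=
      ma.sub mb
    have m6 : Measurable fun w : ((EuclideanSpace ℝ (Fin d)) × (EuclideanSpace ℝ (Fin d)))
        × (Fin n × (Fin d → ℝ)) => lpNorm q (w.1.1 - w.1.2) :=
      (hlpcont q hqpos).measurable.comp ((WithLp.measurable_ofLp 2 _).comp msub)
    have m7 : Measurable fun w : ((EuclideanSpace ℝ (Fin d)) × (EuclideanSpace ℝ (Fin d)))
        × (Fin n × (Fin d → ℝ)) => lpNorm p (gf w.1.2) :=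
      (hlpcont p hppos).measurable.comp ((WithLp.measurable_ofLp 2 _).comp (hgf_meas.comp mb))
    exact (m1.mul (measurable_realSign.comp
      (((m4.sub m5).add m2).add (((m6.const_mul L).add m7).mul mu))))
  -- per-step estimate
  have step : ∀ t : ℕ, Integrable (fun ω => h (x t ω)) μ ∧
      γ * ∫ ω, h (x t ω) ∂μ ≤ (∫ ω, f (x t ω) ∂μ) - (∫ ω, f (x (t+1) ω) ∂μ) + C := by
    intro t
    set Yf : Ω → (EuclideanSpace ℝ (Fin d)) × (EuclideanSpace ℝ (Fin d)) :=
      fun ω => (x t ω, xref t ω) with hYf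
    set Zf : Ω → Fin n × (Fin d → ℝ) := fun ω => (it t ω, U t ω) with hZf
    have hYmeas : Measurable Yf := (hxmeas t).prodMk (hrefmeas t)
    have hZmeas : Measurable Zf := (himeas t).prodMk (hUmeas t)
    -- the sign vector
    set S : Ω → EuclideanSpace ℝ (Fin d) := fun ω => WithLp.toLp 2 fun j =>
      Real.sign (gs (it t ω) (x t ω) j - gs (it t ω) (xref t ω) j + gf (xref t ω) j
        + (L * lpNorm q (x t ω - xref t ω) + lpNorm p (gf (xref t ω))) * U t ω j) with hS
    have hstep_eq : ∀ ω, x (t+1) ω = x t ω - γ • S ω := by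
      intro ω
      ext j
      have h1 : (x t ω - γ • S ω) j = x t ω j - γ * S ω j := rfl
      rw [h1, hrec t ω j, hGt t ω]
    have hΨY : ∀ ω, Ψ (Yf ω, Zf ω) = ⟪gf (x t ω), S ω⟫ := by
      intro ω
      rw [PiLp.inner_apply]
      simp only [hΨdef, hS, hYf, hZf, RCLike.inner_apply, conj_trivial, mul_comm]
    have hSbound : ∀ ω, lpNorm q (γ • S ω) ≤ γ * (d : ℝ) ^ (1/q) := by
      intro ω
      rw [WithLp.ofLp_smul, lpNorm_smul hqpos, abs_of_pos hγ]
      calc γ * lpNorm q (S ω) ≤ γ * ((d : ℝ) ^ (1/q) * 1) := by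
            refine mul_le_mul_of_nonneg_left ?_ hγ.le
            exact lpNorm_le_of_abs_le hq zero_le_one fun j => abs_sign_le _
        _ = γ * (d : ℝ) ^ (1/q) := by ring
    have hSq : ∀ ω, (lpNorm q (γ • S ω)) ^ 2 ≤ γ^2 * Kd := by
      intro ω
      have h1 : (lpNorm q (γ • S ω)) ^ 2 ≤ (γ * (d : ℝ) ^ (1/q)) ^ 2 :=
        pow_le_pow_left₀ (lpNorm_nonneg _ _) (hSbound ω) 2
      calc (lpNorm q (γ • S ω)) ^ 2 ≤ (γ * (d : ℝ) ^ (1/q)) ^ 2 := h1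
        _ = γ^2 * ((d : ℝ) ^ (1/q)) ^ 2 := by ring
        _ = γ^2 * Kd := by rw [hKd']
    have hba : ∀ ω, x (t+1) ω - x t ω = -(γ • S ω) := by
      intro ω
      rw [hstep_eq ω]
      abel
    have Pa : ∀ ω, f (x (t+1) ω) ≤ f (x t ω) - γ * Ψ (Yf ω, Zf ω) + C := by
      intro ω
      have hdsc := descent_le hconj hL hdiff_f hsm_f (x t ω) (x (t+1) ω)
      rw [hba ω] at hdsc
      rw [inner_neg_right, real_inner_smul_right] at hdsc
      rw [WithLp.ofLp_neg, _root_.lpNorm_neg] at hdsc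
      have h2 := hSq ω
      rw [hΨY ω, hC]
      have hL2 : 0 ≤ L/2 := by positivity
      nlinarith [hdsc, h2]
    have Pb : ∀ ω, f (x t ω) - γ * Ψ (Yf ω, Zf ω) - C ≤ f (x (t+1) ω) := by
      intro ω
      have hdsc := descent_ge hconj hL hdiff_f hsm_f (x t ω) (x (t+1) ω)
      rw [hba ω] at hdsc
      rw [inner_neg_right, real_inner_smul_right] at hdsc
      rw [WithLp.ofLp_neg, _root_.lpNorm_neg] at hdsc
      have h2 := hSq ω
      rw [hΨY ω, hC]
      have hL2 : 0 ≤ L/2 := by positivity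
      nlinarith [hdsc, h2]
    -- integrability of the composed kernel
    have hΨYZmeas : Measurable fun ω => Ψ (Yf ω, Zf ω) :=
      hΨmeas.comp (hYmeas.prodMk hZmeas)
    have hfd : Integrable (fun ω => |f (x t ω) - f (x (t+1) ω)| + C) μ :=
      ((hint t).sub (hint (t+1))).abs.add (integrable_const C)
    have hΨYZint : Integrable (fun ω => Ψ (Yf ω, Zf ω)) μ := by
      refine (hfd.div_const γ).mono' hΨYZmeas.aestronglyMeasurable ?_
      refine Filter.Eventually.of_forall fun ω => ?_
      rw [Real.norm_eq_abs, le_div_iff₀ hγ]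
      have h1 := Pa ω
      have h2 := Pb ω
      rw [show |Ψ (Yf ω, Zf ω)| * γ = |γ * Ψ (Yf ω, Zf ω)| by
        rw [abs_mul, abs_of_pos hγ]; ring]
      refine abs_le.mpr ⟨?_, ?_⟩
      · have := neg_abs_le (f (x t ω) - f (x (t+1) ω))
        linarith
      · have := le_abs_self (f (x t ω) - f (x (t+1) ω))
        linarith
    -- joint law
    haveI : IsProbabilityMeasure (Measure.map Yf μ) :=
      Measure.isProbabilityMeasure_map hYmeas.aemeasurable
    have hjoint : Measure.map (fun ω => (Yf ω, Zf ω)) μ = (Measure.map Yf μ).prod lawZ := by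
      have h1 := (indepFun_iff_map_prod_eq_prod_map_map hYmeas.aemeasurable
        hZmeas.aemeasurable).mp (hindep t).symm
      rw [h1, hlawZ]
      congr 1
      exact hlaw t
    have hΨprod : Integrable Ψ ((Measure.map Yf μ).prod lawZ) := by
      rw [← hjoint]
      exact (integrable_map_measure hΨmeas.aestronglyMeasurable
        (hYmeas.prodMk hZmeas).aemeasurable).mpr hΨYZint
    have hEq1 : ∫ ω, Ψ (Yf ω, Zf ω) ∂μ = ∫ w, Ψ w ∂((Measure.map Yf μ).prod lawZ) := by
      rw [← hjoint]
      exact (integral_map (hYmeas.prodMk hZmeas).aemeasurable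
        hΨmeas.aestronglyMeasurable).symm
    have hEq2 : ∫ w, Ψ w ∂((Measure.map Yf μ).prod lawZ)
        = ∫ y, (∫ z, Ψ (y, z) ∂lawZ) ∂(Measure.map Yf μ) :=
      integral_prod _ hΨprod
    have hInner : ∀ y : (EuclideanSpace ℝ (Fin d)) × (EuclideanSpace ℝ (Fin d)),
        ∫ z, Ψ (y, z) ∂lawZ
          = ‖gf y.1‖ ^ 2 / (L * lpNorm q (y.1 - y.2) + lpNorm p (gf y.2)) := by
      intro y
      rw [hΨdef, hlawZ]
      exact exp_inner_eq hn hp hq hL gs gf hgf' hbound y.1 y.2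
    have hFYint : Integrable (fun y => ∫ z, Ψ (y, z) ∂lawZ) (Measure.map Yf μ) :=
      hΨprod.integral_prod_left
    have hDmeas : MeasurableSet {y : (EuclideanSpace ℝ (Fin d)) × (EuclideanSpace ℝ (Fin d)) |
        lpNorm q (y.1 - y.2) ≤ D} := by
      have msub : Measurable fun y : (EuclideanSpace ℝ (Fin d)) × (EuclideanSpace ℝ (Fin d)) =>
          (y.1 - y.2 : EuclideanSpace ℝ (Fin d)) :=
        measurable_fst.sub measurable_snd
      exact measurableSet_le ((hlpcont q hqpos).measurable.comp ((WithLp.measurable_ofLp 2 _).comp msub)) measurable_const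
    have hDae : ∀ᵐ y ∂(Measure.map Yf μ), lpNorm q (y.1 - y.2) ≤ D := by
      refine (ae_map_iff hYmeas.aemeasurable hDmeas).mpr ?_
      exact Filter.Eventually.of_forall fun ω => hclose t ω
    have hae_le : ∀ᵐ y ∂(Measure.map Yf μ), h y.1 ≤ ∫ z, Ψ (y, z) ∂lawZ := by
      filter_upwards [hDae] with y hy
      rw [hInner y]
      set G : ℝ := L * lpNorm q (y.1 - y.2) + lpNorm p (gf y.2) with hG
      have hGnn : 0 ≤ G := by
        have h1 := lpNorm_nonneg q (y.1 - y.2)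
        have h2 := lpNorm_nonneg p (gf y.2)
        nlinarith
      by_cases hgfa : gf y.1 = 0
      · have hz : h y.1 = 0 := by
          rw [hh]
          simp [hgfa]
        rw [hz]
        exact div_nonneg (by positivity) hGnn
      · have hGpos : 0 < G := by
          rcases eq_or_lt_of_le hGnn with hGz | hGp
          · exfalso
            have h1 : lpNorm q (y.1 - y.2) = 0 := by
              have h2 := lpNorm_nonneg q (y.1 - y.2)
              have h3 := lpNorm_nonneg p (gf y.2)
              nlinarith [hGz.symm]
            have h2 : lpNorm p (gf y.2) = 0 := by
              have h3 := lpNorm_nonneg q (y.1 - y.2)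
              nlinarith [hGz.symm, lpNorm_nonneg p (gf y.2)]
            have hab : y.1 = y.2 := sub_eq_zero.mp ((WithLp.ofLp_eq_zero 2).mp (lpNorm_eq_zero_iff hq h1))
            have : gf y.1 = 0 := by rw [hab]; exact (WithLp.ofLp_eq_zero 2).mp (lpNorm_eq_zero_iff hp h2)
            exact hgfa this
          · exact hGp
        have htri : lpNorm p (gf y.2) ≤ lpNorm p (gf y.1) + L * lpNorm q (y.1 - y.2) := by
          have h1 : (gf y.2 : Fin d → ℝ) = gf y.1 + (gf y.2 - gf y.1) := by abel
          calc lpNorm p (gf y.2) = lpNorm p (gf y.1 + (gf y.2 - gf y.1)) := by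
                rw [WithLp.ofLp_add, WithLp.ofLp_sub, ← h1]
            _ ≤ lpNorm p (gf y.1) + lpNorm p (gf y.2 - gf y.1) := lpNorm_add_le hp _ _
            _ ≤ lpNorm p (gf y.1) + L * lpNorm q (y.2 - y.1) := by
                linarith [hsm_f y.2 y.1]
            _ = lpNorm p (gf y.1) + L * lpNorm q (y.1 - y.2) := by
                rw [WithLp.ofLp_sub, _root_.lpNorm_sub_comm, ← WithLp.ofLp_sub]
        have hGle : G ≤ 2 * L * D + lpNorm p (gf y.1) := by
          rw [hG]
          have h1 : lpNorm q (y.1 - y.2) ≤ D := hy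
          nlinarith [h1, htri, hL.le]
        rw [hh]
        exact div_le_div_of_nonneg_left (by positivity) hGpos hGle
    have hae_norm : ∀ᵐ y ∂(Measure.map Yf μ), ‖h y.1‖ ≤ ∫ z, Ψ (y, z) ∂lawZ := by
      filter_upwards [hae_le] with y hy
      rw [Real.norm_eq_abs, abs_of_nonneg (hHnonneg _)]
      exact hy
    have hHint' : Integrable (fun y => h y.1) (Measure.map Yf μ) :=
      hFYint.mono' ((hHmeas.comp measurable_fst).aestronglyMeasurable) hae_norm
    have hHint : Integrable (fun ω => h (x t ω)) μ := by
      have := (integrable_map_measure ((hHmeas.comp measurable_fst).aestronglyMeasurable)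
        hYmeas.aemeasurable).mp hHint'
      exact this
    refine ⟨hHint, ?_⟩
    have hkey : ∫ ω, h (x t ω) ∂μ ≤ ∫ ω, Ψ (Yf ω, Zf ω) ∂μ := by
      have e1 : ∫ ω, h (x t ω) ∂μ = ∫ y, h y.1 ∂(Measure.map Yf μ) :=
        (integral_map hYmeas.aemeasurable
          ((hHmeas.comp measurable_fst).aestronglyMeasurable)).symm
      rw [e1, hEq1, hEq2]
      exact integral_mono_ae hHint' hFYint hae_le
    have hstep3 : γ * ∫ ω, Ψ (Yf ω, Zf ω) ∂μ
        ≤ (∫ ω, f (x t ω) ∂μ) - (∫ ω, f (x (t+1) ω) ∂μ) + C := by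
      have h1 : ∫ ω, (f (x (t+1) ω) + γ * Ψ (Yf ω, Zf ω)) ∂μ
          ≤ ∫ ω, (f (x t ω) + C) ∂μ := by
        refine integral_mono ((hint (t+1)).add (hΨYZint.const_mul γ))
          ((hint t).add (integrable_const C)) fun ω => ?_
        have := Pa ω
        simp only [Pi.add_apply]
        linarith
      rw [integral_add (hint (t+1)) (hΨYZint.const_mul γ), integral_add (hint t)
        (integrable_const C), MeasureTheory.integral_const_mul, integral_const] at h1
      have h2 : μ.real Set.univ • C = C := by
        simp [measure_univ]
      rw [h2] at h1
      linarith
    calc γ * ∫ ω, h (x t ω) ∂μ ≤ γ * ∫ ω, Ψ (Yf ω, Zf ω) ∂μ :=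
          mul_le_mul_of_nonneg_left hkey hγ.le
      _ ≤ (∫ ω, f (x t ω) ∂μ) - (∫ ω, f (x (t+1) ω) ∂μ) + C := hstep3
  -- summation and conclusion
  set A : ℕ → ℝ := fun t => ∫ ω, f (x t ω) ∂μ with hA
  have htel : ∑ t ∈ Finset.Icc 1 T, (A t - A (t+1)) = A 1 - A (T+1) := by
    rw [← Finset.Ico_add_one_right_eq_Icc, Finset.sum_Ico_eq_sum_range]
    have h2 := Finset.sum_range_sub' (fun k => A (k+1)) T
    calc ∑ k ∈ Finset.range T, (A (1 + k) - A (1 + k + 1))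
        = ∑ k ∈ Finset.range T, (A (k + 1) - A (k + 1 + 1)) := by
          refine Finset.sum_congr rfl fun k _ => ?_
          rw [Nat.add_comm 1 k]
      _ = A 1 - A (T + 1) := h2
  have hsumineq : γ * ∑ t ∈ Finset.Icc 1 T, ∫ ω, h (x t ω) ∂μ
      ≤ (A 1 - A (T+1)) + (T : ℝ) * C := by
    have h1 : ∀ t ∈ Finset.Icc 1 T, γ * ∫ ω, h (x t ω) ∂μ ≤ (A t - A (t+1)) + C :=
      fun t _ => by linarith [(step t).2]
    calc γ * ∑ t ∈ Finset.Icc 1 T, ∫ ω, h (x t ω) ∂μ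
        = ∑ t ∈ Finset.Icc 1 T, γ * ∫ ω, h (x t ω) ∂μ := Finset.mul_sum _ _ _
      _ ≤ ∑ t ∈ Finset.Icc 1 T, ((A t - A (t+1)) + C) := Finset.sum_le_sum h1
      _ = (A 1 - A (T+1)) + (T : ℝ) * C := by
          rw [Finset.sum_add_distrib, htel, Finset.sum_const, Nat.card_Icc]
          simp only [Nat.add_sub_cancel, nsmul_eq_mul]
  have hgoalLHS : ∫ ω, (∑ t ∈ Finset.Icc 1 T,
      ‖gf (x t ω)‖ ^ 2 / (2 * L * D + lpNorm p (gf (x t ω)))) ∂μ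
      = ∑ t ∈ Finset.Icc 1 T, ∫ ω, h (x t ω) ∂μ :=
    integral_finset_sum _ fun t _ => (step t).1
  have hA1 : ∫ ω, (f (x 1 ω) - f (x (T+1) ω)) ∂μ = A 1 - A (T+1) :=
    integral_sub (hint 1) (hint (T+1))
  have hTpos : (0:ℝ) < (T:ℝ) := by
    have : 0 < T := lt_of_lt_of_le Nat.one_pos hT
    exact_mod_cast this
  have hTγ : (0:ℝ) < (T:ℝ) * γ := by positivity
  rw [hgoalLHS, hA1]
  calc (1/(T:ℝ)) * ∑ t ∈ Finset.Icc 1 T, ∫ ω, h (x t ω) ∂μ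
      = (γ * ∑ t ∈ Finset.Icc 1 T, ∫ ω, h (x t ω) ∂μ)/((T:ℝ)*γ) := by
        field_simp
    _ ≤ ((A 1 - A (T+1)) + (T:ℝ)*C)/((T:ℝ)*γ) := by gcongr
    _ = (A 1 - A (T+1))/((T:ℝ)*γ) + L*γ*Kd/2 := by
        rw [hC]
        field_simp
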